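/- arXiv:1911.02409 — 3 statements merged into one kernel-verified Lean document; each statement's English description precedes it below -/
import Mathlib

section
/- Let ξ ∈ ℂ and let Φ : ℝ³ \ {0} → ℂ be given by Φ(x) = e^{iξ‖x‖}/(4π‖x‖). Then Φ satisfies the homogeneous Helmholtz equation away from the origin: for every x ∈ ℝ³ with x ≠ 0, ∑_{j=1}^{3} ∂ⱼ∂ⱼΦ(x) + ξ²Φ(x) = 0. -/
/-!
Write `Φ(x) = g(‖x‖)` with `g(r) = e^{iξr}/(4πr)`. For a radial function on an inner product
space, summing the second directional derivatives over an orthonormal basis gives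
`g''(r) + (n - 1) g'(r) / r`. Here `g' = (iξ - 1/r) g` and `g'' = ((iξ - 1/r)² + 1/r²) g`, so
for `n = 3` the sum is `(iξ)² g = -ξ² g`.
-/

open Complex Real

/-- The outgoing fundamental solution of the Helmholtz equation in `ℝ³` with
complex wavenumber `ξ`: `Φ(x) = e^{iξ‖x‖}/(4π‖x‖)`. -/
noncomputable def Phi (ξ : ℂ) (x : EuclideanSpace ℝ (Fin 3)) : ℂ :=
  Complex.exp (Complex.I * ξ * (‖x‖ : ℂ)) / (4 * (Real.pi : ℂ) * (‖x‖ : ℂ))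

/-- Partial derivative `∂ₘ f` of a function `f : ℝ³ → ℂ`. -/
noncomputable def pd (m : Fin 3) (f : EuclideanSpace ℝ (Fin 3) → ℂ)
    (x : EuclideanSpace ℝ (Fin 3)) : ℂ :=
  fderiv ℝ f x (EuclideanSpace.single m 1)

open Filter Topology
open scoped RealInnerProductSpace

section Radial

variable {E : Type*} [NormedAddCommGroup E] [InnerProductSpace ℝ E]
  {F : Type*} [NormedAddCommGroup F] [NormedSpace ℝ F]

theorem hasFDerivAt_norm_of_ne_zero {x : E} (hx : x ≠ 0) :
    HasFDerivAt (‖·‖) (‖x‖⁻¹ • innerSL ℝ x) x := by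
  have h := (hasStrictFDerivAt_norm_sq x).hasFDerivAt.sqrt (pow_ne_zero 2 (norm_ne_zero_iff.2 hx))
  simp only [Real.sqrt_sq (norm_nonneg _)] at h
  convert h using 1
  ext v
  simp only [smul_apply, coe_innerSL_apply, smul_eq_mul, one_div, mul_inv_rev, nsmul_eq_mul,
    Nat.cast_ofNat]
  field_simp

theorem HasDerivAt.hasFDerivAt_comp_norm {h : ℝ → F} {h' : F} {x : E} (hx : x ≠ 0)
    (hh : HasDerivAt h h' ‖x‖) :
    HasFDerivAt (fun y ↦ h ‖y‖) ((‖x‖⁻¹ • innerSL ℝ x).smulRight h') x := by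
  refine (hh.hasFDerivAt.comp x (hasFDerivAt_norm_of_ne_zero hx)).congr_fderiv ?_
  ext v
  simp [mul_smul]

theorem HasDerivAt.fderiv_comp_norm_apply {h : ℝ → F} {h' : F} {x : E} (hx : x ≠ 0)
    (hh : HasDerivAt h h' ‖x‖) (v : E) :
    fderiv ℝ (fun y ↦ h ‖y‖) x v = ⟪v, x⟫ • ‖x‖⁻¹ • h' := by
  simp [(hh.hasFDerivAt_comp_norm hx).fderiv, smul_smul, mul_comm, real_inner_comm]

theorem fderiv_fderiv_comp_norm_apply {h h' : ℝ → F} {h'' : F} {x : E} (hx : x ≠ 0)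
    (hh : ∀ᶠ r in 𝓝 ‖x‖, HasDerivAt h (h' r) r) (hh' : HasDerivAt h' h'' ‖x‖) (v : E) :
    fderiv ℝ (fun y ↦ fderiv ℝ (fun z ↦ h ‖z‖) y v) x v =
      (‖v‖ ^ 2 / ‖x‖ - ⟪v, x⟫ ^ 2 / ‖x‖ ^ 3) • h' ‖x‖ + (⟪v, x⟫ ^ 2 / ‖x‖ ^ 2) • h'' := by
  have hx' : ‖x‖ ≠ 0 := norm_ne_zero_iff.2 hx
  have hfirst : (fun y ↦ fderiv ℝ (fun z ↦ h ‖z‖) y v) =ᶠ[𝓝 x]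
      fun y ↦ ⟪v, y⟫ • ‖y‖⁻¹ • h' ‖y‖ := by
    filter_upwards [eventually_ne_nhds hx, continuous_norm.continuousAt.eventually hh]
      with y hy hhy
    exact hhy.fderiv_comp_norm_apply hy v
  have hsecond : HasFDerivAt (fun y ↦ ⟪v, y⟫ • ‖y‖⁻¹ • h' ‖y‖) _ x :=
    (innerSL ℝ v).hasFDerivAt.smul (((hasDerivAt_inv hx').smul hh').hasFDerivAt_comp_norm hx)
  rw [hfirst.fderiv_eq, hsecond.fderiv]
  simp only [add_apply, smul_apply, smul_eq_mul,
    ContinuousLinearMap.smulRight_apply, innerSL_apply_apply, real_inner_self_eq_norm_sq,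
    real_inner_comm x v]
  match_scalars <;> field_simp
  ring

theorem OrthonormalBasis.sum_fderiv_fderiv_comp_norm {ι : Type*} [Fintype ι]
    (b : OrthonormalBasis ι ℝ E) {h h' : ℝ → F} {h'' : F} {x : E} (hx : x ≠ 0)
    (hh : ∀ᶠ r in 𝓝 ‖x‖, HasDerivAt h (h' r) r) (hh' : HasDerivAt h' h'' ‖x‖) :
    ∑ i, fderiv ℝ (fun y ↦ fderiv ℝ (fun z ↦ h ‖z‖) y (b i)) x (b i) =
      h'' + ((Fintype.card ι - 1) / ‖x‖) • h' ‖x‖ := by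
  have hx' : ‖x‖ ≠ 0 := norm_ne_zero_iff.2 hx
  simp_rw [fderiv_fderiv_comp_norm_apply hx hh hh', Finset.sum_add_distrib, ← Finset.sum_smul,
    Finset.sum_sub_distrib, ← Finset.sum_div, b.sum_sq_inner_right, b.orthonormal.1,
    Finset.sum_const, Finset.card_univ, nsmul_eq_mul]
  match_scalars <;> field_simp

end Radial

noncomputable def helmholtzProfile (ξ : ℂ) (r : ℝ) : ℂ :=
  Complex.exp (Complex.I * ξ * r) / (4 * (Real.pi : ℂ) * r)

theorem hasDerivAt_helmholtzProfile (ξ : ℂ) {r : ℝ} (hr : r ≠ 0) :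
    HasDerivAt (helmholtzProfile ξ) ((I * ξ - (r : ℂ)⁻¹) * helmholtzProfile ξ r) r := by
  have hr' : (r : ℂ) ≠ 0 := ofReal_ne_zero.2 hr
  have hπ : (π : ℂ) ≠ 0 := ofReal_ne_zero.2 pi_ne_zero
  have h := (((hasDerivAt_id (r : ℂ)).const_mul (I * ξ)).cexp.div
    ((hasDerivAt_id (r : ℂ)).const_mul (4 * (π : ℂ))) (by simp [hr', hπ])).comp_ofReal
  refine h.congr_deriv ?_
  simp only [helmholtzProfile, id]
  field_simp

theorem hasDerivAt_deriv_helmholtzProfile (ξ : ℂ) {r : ℝ} (hr : r ≠ 0) :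
    HasDerivAt (fun s : ℝ ↦ (I * ξ - (s : ℂ)⁻¹) * helmholtzProfile ξ s)
      (((I * ξ - (r : ℂ)⁻¹) ^ 2 + ((r : ℂ) ^ 2)⁻¹) * helmholtzProfile ξ r) r := by
  have hr' : (r : ℂ) ≠ 0 := ofReal_ne_zero.2 hr
  have hinv := (hasDerivAt_inv hr').comp_ofReal
  refine ((hinv.const_sub (I * ξ)).mul (hasDerivAt_helmholtzProfile ξ hr)).congr_deriv ?_
  ring

/-- `Φ` satisfies the homogeneous Helmholtz equation away from the origin:
`ΔΦ(x) + ξ²Φ(x) = 0` for every `x ≠ 0`. -/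
theorem stmt_3 (ξ : ℂ) (x : EuclideanSpace ℝ (Fin 3)) (hx : x ≠ 0) :
    (∑ j : Fin 3, pd j (pd j (Phi ξ)) x) + ξ ^ 2 * Phi ξ x = 0 := by
  have hr : ‖x‖ ≠ 0 := norm_ne_zero_iff.2 hx
  have hlaplace := (EuclideanSpace.basisFun (Fin 3) ℝ).sum_fderiv_fderiv_comp_norm hx
    ((eventually_ne_nhds hr).mono fun _ hs ↦ hasDerivAt_helmholtzProfile ξ hs)
    (hasDerivAt_deriv_helmholtzProfile ξ hr)
  simp only [EuclideanSpace.basisFun_apply, Fintype.card_fin, Nat.cast_ofNat] at hlaplace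
  change ∑ j, fderiv ℝ (fun y ↦ fderiv ℝ (fun z ↦ helmholtzProfile ξ ‖z‖) y _) x _ +
    ξ ^ 2 * helmholtzProfile ξ ‖x‖ = 0
  rw [hlaplace, real_smul]
  push_cast
  linear_combination (ξ ^ 2 * helmholtzProfile ξ ‖x‖) * I_sq
end

section
/- Let ξ ∈ ℂ with Re ξ > 0 and Im ξ > 0, let Φ(x) = e^{iξ‖x‖}/(4π‖x‖), and let G be the matrix-valued function with components G_{jℓ}(x) = −Φ(x)δ_{jℓ} + (1/ξ²)∂ⱼ∂ₗΦ(x). Then for every x ∈ ℝ³ with x ≠ 0 and all 1 ≤ j, ℓ ≤ 3, |G_{jℓ}(x)| ≤ (1/(4π)) · ( 2/‖x‖ + 4/(|ξ|·‖x‖²) + 4/(|ξ|²·‖x‖³) ). -/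
open Complex Real

/-- Component `(j,ℓ)` of the fundamental solution of the time-harmonic Maxwell
equations: `G_{jℓ}(x) = −Φ(x)δ_{jℓ} + (1/ξ²)∂ⱼ∂ₗΦ(x)`. -/
noncomputable def G (ξ : ℂ) (j l : Fin 3) (x : EuclideanSpace ℝ (Fin 3)) : ℂ :=
  -Phi ξ x * (if j = l then 1 else 0) + (1 / ξ ^ 2) * pd j (pd l (Phi ξ)) x

/-! Φ is radial, Φ(x) = φ(‖x‖), so each derivative ∂ₘ only multiplies by xₘ and applies the
operator `(1/r) d/dr` to the radial profile: `∂ₘΦ = φ₁(‖x‖) xₘ` and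
`∂ⱼ∂ₗΦ = φ₂(‖x‖) xⱼ xₗ + φ₁(‖x‖) δⱼₗ` with `φ₁ = φ'/r`, `φ₂ = φ₁'/r`. Since `Im ξ ≥ 0` we have
`|e^{iξr}| ≤ 1`, so the triangle inequality on the polynomial numerators of `φ, φ₁, φ₂`
together with `|xⱼ| ≤ ‖x‖` gives the bound. -/

section RadialCalculus

variable {E : Type*} [NormedAddCommGroup E] [InnerProductSpace ℝ E]

theorem hasFDerivAt_norm_of_ne_zero_s6 {y : E} (hy : y ≠ 0) :
    HasFDerivAt (fun z : E => ‖z‖) (‖y‖⁻¹ • innerSL ℝ y) y := by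
  have h := (hasStrictFDerivAt_norm_sq y).hasFDerivAt.sqrt (by positivity)
  simp only [Real.sqrt_sq (norm_nonneg _)] at h
  convert h using 1
  ext v
  simp only [smul_apply, coe_innerSL_apply, smul_eq_mul, nsmul_eq_mul, Nat.cast_ofNat]
  field_simp

theorem hasFDerivAt_comp_norm {h : ℝ → ℂ} {c : ℂ} {y : E} (hy : y ≠ 0)
    (hh : HasDerivAt h (‖y‖ * c) ‖y‖) :
    HasFDerivAt (fun z => h ‖z‖) (c • ofRealCLM.comp (innerSL ℝ y)) y := by
  have hy' : (‖y‖ : ℂ) ≠ 0 := by exact_mod_cast norm_ne_zero_iff.mpr hy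
  refine (hh.hasFDerivAt.comp y (hasFDerivAt_norm_of_ne_zero_s6 hy)).congr_fderiv ?_
  ext v
  simp only [ContinuousLinearMap.comp_smulₛₗ, map_inv₀, ringHom_apply, smul_apply,
    ContinuousLinearMap.comp_apply, coe_innerSL_apply, ContinuousLinearMap.toSpanSingleton_apply,
    real_smul, ofReal_inv, ofRealCLM_apply, smul_eq_mul]
  field_simp

end RadialCalculus

theorem pd_comp_norm {h : ℝ → ℂ} {c : ℂ} {y : EuclideanSpace ℝ (Fin 3)} (hy : y ≠ 0)
    (hh : HasDerivAt h (‖y‖ * c) ‖y‖) (m : Fin 3) :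
    pd m (fun z => h ‖z‖) y = c * y m := by
  simp [pd, (hasFDerivAt_comp_norm hy hh).fderiv, EuclideanSpace.inner_single_right]

noncomputable def radialPhi (ξ : ℂ) (r : ℝ) : ℂ :=
  exp (I * ξ * r) / (4 * π * r)

noncomputable def radialPhi₁ (ξ : ℂ) (r : ℝ) : ℂ :=
  exp (I * ξ * r) * (I * ξ * r - 1) / (4 * π * r ^ 3)

noncomputable def radialPhi₂ (ξ : ℂ) (r : ℝ) : ℂ :=
  exp (I * ξ * r) * (3 - 3 * I * ξ * r - ξ ^ 2 * r ^ 2) / (4 * π * r ^ 5)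

theorem Phi_eq_radialPhi (ξ : ℂ) : Phi ξ = fun x => radialPhi ξ ‖x‖ := rfl

theorem hasDerivAt_cexp_I_mul (ξ : ℂ) (r : ℝ) :
    HasDerivAt (fun s : ℝ => exp (I * ξ * s)) (exp (I * ξ * r) * (I * ξ)) r := by
  simpa using ((hasDerivAt_id (r : ℂ)).const_mul (I * ξ)).cexp.comp_ofReal

theorem hasDerivAt_radialPhi (ξ : ℂ) {r : ℝ} (hr : r ≠ 0) :
    HasDerivAt (radialPhi ξ) (r * radialPhi₁ ξ r) r := by
  have hr' : (r : ℂ) ≠ 0 := by exact_mod_cast hr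
  have hden : HasDerivAt (fun s : ℝ => 4 * (π : ℂ) * s) (4 * π) r := by
    simpa using ((hasDerivAt_id (r : ℂ)).const_mul (4 * (π : ℂ))).comp_ofReal
  refine ((hasDerivAt_cexp_I_mul ξ r).div hden (by simp [hr', pi_ne_zero])).congr_deriv ?_
  simp only [radialPhi₁]
  field_simp

theorem hasDerivAt_radialPhi₁ (ξ : ℂ) {r : ℝ} (hr : r ≠ 0) :
    HasDerivAt (radialPhi₁ ξ) (r * radialPhi₂ ξ r) r := by
  have hr' : (r : ℂ) ≠ 0 := by exact_mod_cast hr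
  have hlin : HasDerivAt (fun s : ℝ => I * ξ * s - 1) (I * ξ) r := by
    simpa using (((hasDerivAt_id (r : ℂ)).const_mul (I * ξ)).sub_const 1).comp_ofReal
  have hden : HasDerivAt (fun s : ℝ => 4 * (π : ℂ) * s ^ 3) (4 * π * (3 * r ^ 2) : ℂ) r := by
    simpa using ((hasDerivAt_pow 3 (r : ℂ)).const_mul (4 * (π : ℂ))).comp_ofReal
  refine (((hasDerivAt_cexp_I_mul ξ r).mul hlin).div hden
    (by simp [hr', pi_ne_zero])).congr_deriv ?_
  simp only [radialPhi₂, Pi.mul_apply]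
  field_simp
  linear_combination (ξ * r) ^ 2 * I_sq

theorem pd_Phi (ξ : ℂ) {y : EuclideanSpace ℝ (Fin 3)} (hy : y ≠ 0) (m : Fin 3) :
    pd m (Phi ξ) y = radialPhi₁ ξ ‖y‖ * y m :=
  pd_comp_norm hy (hasDerivAt_radialPhi ξ (norm_ne_zero_iff.mpr hy)) m

theorem pd_pd_Phi (ξ : ℂ) {x : EuclideanSpace ℝ (Fin 3)} (hx : x ≠ 0) (j l : Fin 3) :
    pd j (pd l (Phi ξ)) x =
      radialPhi₂ ξ ‖x‖ * x j * x l + radialPhi₁ ξ ‖x‖ * (if j = l then 1 else 0) := by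
  have hloc : pd l (Phi ξ) =ᶠ[nhds x] fun z => radialPhi₁ ξ ‖z‖ * z l := by
    filter_upwards [isOpen_compl_singleton.mem_nhds hx] with z hz
    exact pd_Phi ξ hz l
  have hprod : HasFDerivAt (fun z => radialPhi₁ ξ ‖z‖ * z l) _ x := (hasFDerivAt_comp_norm hx
    (hasDerivAt_radialPhi₁ ξ (norm_ne_zero_iff.mpr hx))).mul
    (ofRealCLM.comp (EuclideanSpace.proj l : EuclideanSpace ℝ (Fin 3) →L[ℝ] ℝ)).hasFDerivAt
  rw [pd, hloc.fderiv_eq, hprod.fderiv]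
  simp only [add_apply, smul_apply, ContinuousLinearMap.comp_apply, PiLp.proj_apply,
    ofRealCLM_apply, coe_innerSL_apply, EuclideanSpace.inner_single_right,
    PiLp.single_apply, conj_trivial, smul_eq_mul, eq_comm (a := l)]
  split_ifs <;> push_cast <;> ring

theorem norm_cexp_I_mul_le_one {ξ : ℂ} (hξ : 0 ≤ ξ.im) {r : ℝ} (hr : 0 ≤ r) :
    ‖exp (I * ξ * r)‖ ≤ 1 := by
  rw [norm_exp, Real.exp_le_one_iff]
  simpa using mul_nonneg hξ hr

theorem norm_cexp_I_mul_mul_div_le {ξ : ℂ} (hξ : 0 ≤ ξ.im) {r : ℝ} (hr : 0 < r) {p : ℂ}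
    {B : ℝ} (hp : ‖p‖ ≤ B) (n : ℕ) :
    ‖exp (I * ξ * r) * p / (4 * π * r ^ n)‖ ≤ B / (4 * π * r ^ n) := by
  have hden : ‖(4 * π * r ^ n : ℂ)‖ = 4 * π * r ^ n := by
    norm_cast
    exact Real.norm_of_nonneg (by positivity)
  rw [norm_div, norm_mul, hden]
  gcongr
  calc ‖exp (I * ξ * r)‖ * ‖p‖ ≤ 1 * B :=
        mul_le_mul (norm_cexp_I_mul_le_one hξ hr.le) hp (norm_nonneg p) zero_le_one
    _ = B := one_mul B

theorem norm_radialPhi_le {ξ : ℂ} (hξ : 0 ≤ ξ.im) {r : ℝ} (hr : 0 < r) :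
    ‖radialPhi ξ r‖ ≤ 1 / (4 * π * r) := by
  simpa [radialPhi] using norm_cexp_I_mul_mul_div_le hξ hr norm_one.le 1

theorem norm_radialPhi₁_le {ξ : ℂ} (hξ : 0 ≤ ξ.im) {r : ℝ} (hr : 0 < r) :
    ‖radialPhi₁ ξ r‖ ≤ (‖ξ‖ * r + 1) / (4 * π * r ^ 3) := by
  refine norm_cexp_I_mul_mul_div_le hξ hr ((norm_sub_le _ _).trans ?_) 3
  simp [abs_of_pos hr]

theorem norm_radialPhi₂_le {ξ : ℂ} (hξ : 0 ≤ ξ.im) {r : ℝ} (hr : 0 < r) :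
    ‖radialPhi₂ ξ r‖ ≤ (‖ξ‖ ^ 2 * r ^ 2 + 3 * ‖ξ‖ * r + 3) / (4 * π * r ^ 5) := by
  refine norm_cexp_I_mul_mul_div_le hξ hr ((norm_sub_le _ _).trans ?_) 5
  grw [norm_sub_le]
  simp only [Complex.norm_ofNat, Complex.norm_mul, norm_I, mul_one, norm_real, norm_eq_abs,
    abs_of_pos hr, norm_pow]
  linarith

theorem norm_G_le (ξ : ℂ) {x : EuclideanSpace ℝ (Fin 3)} (hx : x ≠ 0) (j l : Fin 3) :
    ‖G ξ j l x‖ ≤ ‖radialPhi ξ ‖x‖‖ +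
      (‖radialPhi₂ ξ ‖x‖‖ * ‖x‖ ^ 2 + ‖radialPhi₁ ξ ‖x‖‖) / ‖ξ‖ ^ 2 := by
  have hδ : ‖(if j = l then 1 else 0 : ℂ)‖ ≤ 1 := by split_ifs <;> simp
  have hxj : ‖(x j : ℂ)‖ ≤ ‖x‖ := (norm_real _).trans_le (PiLp.norm_apply_le x j)
  have hxl : ‖(x l : ℂ)‖ ≤ ‖x‖ := (norm_real _).trans_le (PiLp.norm_apply_le x l)
  rw [G, pd_pd_Phi ξ hx]
  calc _
      ≤ ‖radialPhi ξ ‖x‖‖ * 1 +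
          1 / ‖ξ‖ ^ 2 * (‖radialPhi₂ ξ ‖x‖‖ * ‖x‖ * ‖x‖ + ‖radialPhi₁ ξ ‖x‖‖ * 1) := by
        grw [norm_add_le, norm_mul, norm_mul, norm_neg, norm_add_le, norm_mul, norm_mul, norm_mul,
          hδ, hxj, hxl]
        simp [Phi_eq_radialPhi]
    _ = _ := by ring

theorem stmt_6_general (ξ : ℂ) (him : 0 < ξ.im)
    (x : EuclideanSpace ℝ (Fin 3)) (hx : x ≠ 0) (j l : Fin 3) :
    ‖G ξ j l x‖ ≤
      (1 / (4 * Real.pi)) *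
        (2 / ‖x‖ + 4 / (‖ξ‖ * ‖x‖ ^ 2) + 4 / (‖ξ‖ ^ 2 * ‖x‖ ^ 3)) := by
  have hr : 0 < ‖x‖ := norm_pos_iff.mpr hx
  have hξ : 0 < ‖ξ‖ := norm_pos_iff.mpr fun h => by simp [h] at him
  calc ‖G ξ j l x‖
      ≤ ‖radialPhi ξ ‖x‖‖ + (‖radialPhi₂ ξ ‖x‖‖ * ‖x‖ ^ 2 + ‖radialPhi₁ ξ ‖x‖‖) / ‖ξ‖ ^ 2 :=
        norm_G_le ξ hx j l
    _ ≤ 1 / (4 * π * ‖x‖) + ((‖ξ‖ ^ 2 * ‖x‖ ^ 2 + 3 * ‖ξ‖ * ‖x‖ + 3) / (4 * π * ‖x‖ ^ 5)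
          * ‖x‖ ^ 2 + (‖ξ‖ * ‖x‖ + 1) / (4 * π * ‖x‖ ^ 3)) / ‖ξ‖ ^ 2 := by
        grw [norm_radialPhi_le him.le hr, norm_radialPhi₁_le him.le hr,
          norm_radialPhi₂_le him.le hr]
    _ = _ := by
        field_simp
        ring

/-- Componentwise estimate for the Maxwell fundamental solution:
`|G_{jℓ}(x)| ≤ (1/(4π))(2/‖x‖ + 4/(|ξ|‖x‖²) + 4/(|ξ|²‖x‖³))` for `x ≠ 0`,
when `Re ξ > 0` and `Im ξ > 0`. -/
theorem stmt_6 (ξ : ℂ) (hre : 0 < ξ.re) (him : 0 < ξ.im)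
    (x : EuclideanSpace ℝ (Fin 3)) (hx : x ≠ 0) (j l : Fin 3) :
    ‖G ξ j l x‖ ≤
      (1 / (4 * Real.pi)) *
        (2 / ‖x‖ + 4 / (‖ξ‖ * ‖x‖ ^ 2) + 4 / (‖ξ‖ ^ 2 * ‖x‖ ^ 3)) :=
  stmt_6_general ξ him x hx j l
end

section
/- Let ξ ∈ ℂ with Re ξ > 0 and Im ξ > 0, let Φ(x) = e^{iξ‖x‖}/(4π‖x‖), and let G be the matrix-valued function with components G_{jℓ}(x) = −Φ(x)δ_{jℓ} + (1/ξ²)∂ⱼ∂ₗΦ(x). Then each component G_{jℓ} is differentiable on ℝ³ \ {0}, and there exist positive real constants a, b, c, d, depending only on |ξ| (equivalently, a polynomial q of degree 4 with positive coefficients and vanishing constant term), such that for all x ∈ ℝ³ with x ≠ 0 and all 1 ≤ j, ℓ, m ≤ 3, |∂ₘG_{jℓ}(x)| ≤ q(1/‖x‖) = a/‖x‖ + b/‖x‖² + c/‖x‖³ + d/‖x‖⁴. -/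
/-!
Off the origin, `Φ = e^{iξr}/(4πr)` with `r = ‖x‖`. By the product and chain rules, `∂ₘ` maps
`e^{iξr} r^{-k} x^L` (`x^L` a monomial of degree `|L|`) to
`iξ e^{iξr} r^{-k-1} xₘx^L - k e^{iξr} r^{-k-2} xₘx^L + e^{iξr} r^{-k} ∂ₘx^L`,
a combination of terms of the same shape in which `k - |L|` has grown by at most one. For `Φ`,
`k - |L| = 1`, so `∂ₘG_{jℓ}` is a combination of such terms with `1 ≤ k - |L| ≤ 4`. Since
`|xᵢ| ≤ r` and `|e^{iξr}| ≤ 1` for `Im ξ ≥ 0`, each of them is bounded by `r^{|L|-k}`, a power of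
`1/r` between the first and the fourth.
-/

open Complex Real

open Set Filter

theorem hasFDerivAt_norm {F : Type*} [NormedAddCommGroup F] [InnerProductSpace ℝ F] {x : F}
    (hx : x ≠ 0) : HasFDerivAt (‖·‖) (‖x‖⁻¹ • innerSL ℝ x) x := by
  have h := ((hasFDerivAt_id x).norm_sq).sqrt (pow_ne_zero 2 (norm_ne_zero_iff.2 hx))
  simp only [id, Real.sqrt_sq (norm_nonneg _)] at h
  convert h using 1
  ext v
  simp only [smul_apply, coe_innerSL_apply, smul_eq_mul, one_div, mul_inv_rev,
    ContinuousLinearMap.comp_id, nsmul_eq_mul, Nat.cast_ofNat]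
  field_simp

theorem fderiv_comp_norm_single {ι F : Type*} [Fintype ι] [DecidableEq ι] [NormedAddCommGroup F]
    [NormedSpace ℝ F] {φ : ℝ → F} {φ' : F} {x : EuclideanSpace ℝ ι} (hφ : HasDerivAt φ φ' ‖x‖)
    (hx : x ≠ 0) (m : ι) :
    fderiv ℝ (fun y => φ ‖y‖) x (EuclideanSpace.single m 1) = (x m / ‖x‖) • φ' := by
  have h : HasFDerivAt (fun y => φ ‖y‖) _ x := hφ.hasFDerivAt.comp x (hasFDerivAt_norm hx)
  rw [h.fderiv]
  simp [EuclideanSpace.inner_single_right, div_eq_inv_mul, mul_smul]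

noncomputable def radialFactor (ξ : ℂ) (k : ℕ) (r : ℝ) : ℂ :=
  cexp (I * ξ * r) * (r : ℂ) ^ (-(k : ℤ))

theorem radialFactor_succ (ξ : ℂ) (k : ℕ) {r : ℝ} (hr : r ≠ 0) :
    radialFactor ξ (k + 1) r = radialFactor ξ k r / r := by
  have hr' : (r : ℂ) ≠ 0 := ofReal_ne_zero.2 hr
  simp only [radialFactor, Nat.cast_add, Nat.cast_one, neg_add, zpow_add₀ hr', zpow_neg_one]
  ring

theorem hasDerivAt_radialFactor (ξ : ℂ) (k : ℕ) {r : ℝ} (hr : r ≠ 0) :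
    HasDerivAt (radialFactor ξ k)
      (I * ξ * radialFactor ξ k r - k * radialFactor ξ (k + 1) r) r := by
  have hr' : (r : ℂ) ≠ 0 := ofReal_ne_zero.2 hr
  have hexp : HasDerivAt (fun s : ℝ => cexp (I * ξ * s)) (cexp (I * ξ * r) * (I * ξ)) r := by
    simpa using ((hasDerivAt_id (r : ℂ)).const_mul (I * ξ)).cexp.comp_ofReal
  have hpow := (hasDerivAt_zpow (-(k : ℤ)) (r : ℂ) (Or.inl hr')).comp_ofReal
  refine (hexp.mul hpow).congr_deriv ?_
  simp only [radialFactor, Nat.cast_add, Nat.cast_one, neg_add, zpow_add₀ hr', zpow_neg_one,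
    sub_eq_add_neg (-(k : ℤ)), Int.cast_neg, Int.cast_natCast]
  ring

theorem mul_mem_span_of_forall_mem {R A : Type*} [CommSemiring R] [Semiring A] [Algebra R A]
    {w : A} {s t : Set A} (h : ∀ a ∈ s, w * a ∈ Submodule.span R t) {a : A}
    (ha : a ∈ Submodule.span R s) : w * a ∈ Submodule.span R t :=
  Submodule.span_le (p := (Submodule.span R t).comap (LinearMap.mulLeft R w)) |>.2 h ha

section
variable {ι : Type*}

noncomputable def coordMonomial (L : List ι) (x : EuclideanSpace ℝ ι) : ℂ :=
  (L.map fun i => (x i : ℂ)).prod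

theorem coordMonomial_nil : coordMonomial ([] : List ι) = 1 := by
  ext; simp [coordMonomial]

theorem coordMonomial_cons (i : ι) (L : List ι) :
    coordMonomial (i :: L) = (fun x => (x i : ℂ)) * coordMonomial L := by
  ext; simp [coordMonomial]

theorem hasFDerivAt_ofReal_apply (i : ι) (x : EuclideanSpace ℝ ι) :
    HasFDerivAt (fun y : EuclideanSpace ℝ ι => (y i : ℂ))
      (ofRealCLM.comp (EuclideanSpace.proj i)) x :=
  (ofRealCLM.comp (EuclideanSpace.proj i)).hasFDerivAt

variable [Fintype ι]

theorem norm_coordMonomial_le (L : List ι) (x : EuclideanSpace ℝ ι) :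
    ‖coordMonomial L x‖ ≤ ‖x‖ ^ L.length := by
  induction L with
  | nil => simp [coordMonomial_nil]
  | cons i L ih =>
    rw [coordMonomial_cons, Pi.mul_apply, norm_mul, norm_real, List.length_cons, pow_succ']
    exact mul_le_mul (PiLp.norm_apply_le x i) ih (norm_nonneg _) (norm_nonneg _)

theorem differentiable_coordMonomial (L : List ι) : Differentiable ℝ (coordMonomial L) := by
  induction L with
  | nil => rw [coordMonomial_nil]; exact differentiable_const 1
  | cons i L ih =>
    rw [coordMonomial_cons]
    exact Differentiable.mul (fun x => (hasFDerivAt_ofReal_apply i x).differentiableAt) ih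

variable [DecidableEq ι]

theorem fderiv_coordMonomial_single_mem_span (L : List ι) (m : ι) :
    (fun x => fderiv ℝ (coordMonomial L) x (EuclideanSpace.single m 1)) ∈
      Submodule.span ℂ {f | ∃ L' : List ι, L'.length + 1 = L.length ∧ coordMonomial L' = f} := by
  induction L with
  | nil => simp [coordMonomial_nil, Pi.zero_def]
  | cons i L ih =>
    have hprod : (fun x => fderiv ℝ (coordMonomial (i :: L)) x (EuclideanSpace.single m 1)) =
        (fun x => (x i : ℂ)) * (fun x => fderiv ℝ (coordMonomial L) x (EuclideanSpace.single m 1))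
          + (if i = m then 1 else 0 : ℂ) • coordMonomial L := by
      ext x
      rw [coordMonomial_cons, fderiv_mul (hasFDerivAt_ofReal_apply i x).differentiableAt
        (differentiable_coordMonomial L x), (hasFDerivAt_ofReal_apply i x).fderiv]
      split_ifs <;> simp_all
    rw [hprod]
    refine add_mem (mul_mem_span_of_forall_mem ?_ ih) (Submodule.smul_mem _ _ ?_)
    · rintro _ ⟨L', hL', rfl⟩
      exact Submodule.subset_span ⟨i :: L', by simp [hL'], (coordMonomial_cons i L').symm⟩
    · exact Submodule.subset_span ⟨L, rfl, rfl⟩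

end

section
variable {ι : Type*} [Fintype ι] {ξ : ℂ}

noncomputable def radialTerm (ξ : ℂ) (L : List ι) (k : ℕ) : EuclideanSpace ℝ ι → ℂ :=
  (fun x => radialFactor ξ k ‖x‖) * coordMonomial L

variable (ι) in
noncomputable def radialSpan (ξ : ℂ) (n : ℕ) : Submodule ℂ (EuclideanSpace ℝ ι → ℂ) :=
  Submodule.span ℂ {f | ∃ L k, L.length + 1 ≤ k ∧ k ≤ L.length + n ∧ radialTerm ξ L k = f}

theorem differentiableAt_radialFactor_norm (ξ : ℂ) (k : ℕ) {x : EuclideanSpace ℝ ι}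
    (hx : x ≠ 0) : DifferentiableAt ℝ (fun y : EuclideanSpace ℝ ι => radialFactor ξ k ‖y‖) x :=
  (hasDerivAt_radialFactor ξ k (norm_ne_zero_iff.2 hx)).differentiableAt.comp x
    (hasFDerivAt_norm hx).differentiableAt

theorem differentiableAt_radialTerm (ξ : ℂ) (L : List ι) (k : ℕ) {x : EuclideanSpace ℝ ι}
    (hx : x ≠ 0) : DifferentiableAt ℝ (radialTerm ξ L k) x :=
  (differentiableAt_radialFactor_norm ξ k hx).mul (differentiable_coordMonomial L x)

theorem fderiv_radialTerm_single [DecidableEq ι] (ξ : ℂ) (L : List ι) (k : ℕ) (m : ι)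
    {x : EuclideanSpace ℝ ι} (hx : x ≠ 0) :
    fderiv ℝ (radialTerm ξ L k) x (EuclideanSpace.single m 1) =
      I * ξ * radialTerm ξ (m :: L) (k + 1) x - k * radialTerm ξ (m :: L) (k + 2) x +
        radialFactor ξ k ‖x‖ * fderiv ℝ (coordMonomial L) x (EuclideanSpace.single m 1) := by
  have hr : ‖x‖ ≠ 0 := norm_ne_zero_iff.2 hx
  have hr' : (‖x‖ : ℂ) ≠ 0 := ofReal_ne_zero.2 hr
  rw [radialTerm, fderiv_mul (differentiableAt_radialFactor_norm ξ k hx)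
    (differentiable_coordMonomial L x)]
  simp only [add_apply, smul_apply, smul_eq_mul, real_smul, radialTerm, Pi.mul_apply,
    fderiv_comp_norm_single (hasDerivAt_radialFactor ξ k hr) hx, coordMonomial_cons,
    radialFactor_succ ξ _ hr]
  push_cast
  field_simp
  ring

theorem radialSpan_mono {n n' : ℕ} (h : n ≤ n') : radialSpan ι ξ n ≤ radialSpan ι ξ n' :=
  Submodule.span_mono fun _ ⟨L, k, h₁, h₂, hf⟩ => ⟨L, k, h₁, by omega, hf⟩

theorem differentiableAt_of_mem_radialSpan {n : ℕ} {f : EuclideanSpace ℝ ι → ℂ}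
    (hf : f ∈ radialSpan ι ξ n) {x : EuclideanSpace ℝ ι} (hx : x ≠ 0) :
    DifferentiableAt ℝ f x := by
  induction hf using Submodule.span_induction with
  | mem f hf =>
    obtain ⟨L, k, -, -, rfl⟩ := hf
    exact differentiableAt_radialTerm ξ L k hx
  | zero => exact differentiableAt_const 0
  | add f g _ _ hf hg => exact hf.add hg
  | smul c f _ hf => exact hf.const_smul c

theorem exists_mem_radialSpan_eqOn_fderiv_single [DecidableEq ι] {n : ℕ}
    {f : EuclideanSpace ℝ ι → ℂ} (hf : f ∈ radialSpan ι ξ n) (m : ι) :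
    ∃ g ∈ radialSpan ι ξ (n + 1),
      EqOn (fun x => fderiv ℝ f x (EuclideanSpace.single m 1)) g {0}ᶜ := by
  induction hf using Submodule.span_induction with
  | mem f hf =>
    obtain ⟨L, k, hk₁, hk₂, rfl⟩ := hf
    have hterm : ∀ L' k', L'.length + 1 ≤ k' → k' ≤ L'.length + (n + 1) →
        radialTerm ξ L' k' ∈ radialSpan ι ξ (n + 1) :=
      fun L' k' h₁ h₂ => Submodule.subset_span ⟨L', k', h₁, h₂, rfl⟩
    refine ⟨(I * ξ) • radialTerm ξ (m :: L) (k + 1) + (-(k : ℂ)) • radialTerm ξ (m :: L) (k + 2)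
        + (fun x => radialFactor ξ k ‖x‖) *
          fun x => fderiv ℝ (coordMonomial L) x (EuclideanSpace.single m 1), ?_, ?_⟩
    · have hlen : (m :: L).length = L.length + 1 := rfl
      refine add_mem (add_mem (Submodule.smul_mem _ _ (hterm _ _ (by omega) (by omega)))
        (Submodule.smul_mem _ _ (hterm _ _ (by omega) (by omega))))
        (mul_mem_span_of_forall_mem ?_ (fderiv_coordMonomial_single_mem_span L m))
      rintro _ ⟨L', hL', rfl⟩
      exact hterm L' k (by omega) (by omega)
    · intro x hx
      simp only [fderiv_radialTerm_single ξ L k m hx, Pi.add_apply, Pi.smul_apply, Pi.mul_apply,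
        smul_eq_mul]
      ring
  | zero => exact ⟨0, zero_mem _, fun x _ => by simp⟩
  | add f g hf hg ihf ihg =>
    obtain ⟨f', hf', hff'⟩ := ihf
    obtain ⟨g', hg', hgg'⟩ := ihg
    refine ⟨f' + g', add_mem hf' hg', fun x hx => ?_⟩
    simp only [fderiv_add (differentiableAt_of_mem_radialSpan hf hx)
      (differentiableAt_of_mem_radialSpan hg hx), add_apply, Pi.add_apply, hff' hx, hgg' hx]
  | smul c f hf ihf =>
    obtain ⟨f', hf', hff'⟩ := ihf
    refine ⟨c • f', Submodule.smul_mem _ c hf', fun x hx => ?_⟩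
    simp only [fderiv_const_smul (differentiableAt_of_mem_radialSpan hf hx), smul_apply,
      Pi.smul_apply, hff' hx]

theorem norm_radialTerm_le (hξ : 0 ≤ ξ.im) (L : List ι) (k : ℕ) (x : EuclideanSpace ℝ ι) :
    ‖radialTerm ξ L k x‖ ≤ ‖x‖ ^ (-(k : ℤ)) * ‖x‖ ^ L.length := by
  have hexp : ‖cexp (I * ξ * ‖x‖)‖ ≤ 1 := by
    rw [norm_exp, Real.exp_le_one_iff]
    simpa [mul_re] using mul_nonneg hξ (norm_nonneg x)
  rw [radialTerm, Pi.mul_apply, radialFactor, norm_mul, norm_mul, norm_zpow, norm_real, norm_norm]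
  gcongr
  · exact mul_le_of_le_one_left (by positivity) hexp
  · exact norm_coordMonomial_le L x

theorem exists_norm_le_of_mem_radialSpan (hξ : 0 ≤ ξ.im) {n : ℕ} {f : EuclideanSpace ℝ ι → ℂ}
    (hf : f ∈ radialSpan ι ξ n) :
    ∃ C, ∀ x ≠ 0, ‖f x‖ ≤ C * ∑ i ∈ Finset.range n, ‖x‖⁻¹ ^ (i + 1) := by
  induction hf using Submodule.span_induction with
  | mem f hf =>
    obtain ⟨L, k, hk₁, hk₂, rfl⟩ := hf
    refine ⟨1, fun x hx => ?_⟩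
    obtain ⟨i, hi, rfl⟩ : ∃ i < n, k = L.length + (i + 1) := ⟨k - L.length - 1, by omega, by omega⟩
    have hx' : ‖x‖ ≠ 0 := norm_ne_zero_iff.2 hx
    calc ‖radialTerm ξ L (L.length + (i + 1)) x‖
        ≤ ‖x‖ ^ (-((L.length + (i + 1) : ℕ) : ℤ)) * ‖x‖ ^ L.length := norm_radialTerm_le hξ _ _ x
      _ = ‖x‖⁻¹ ^ (i + 1) := by
        rw [← zpow_natCast, ← zpow_add₀ hx', inv_pow, ← zpow_natCast, ← zpow_neg]
        push_cast; ring_nf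
      _ ≤ 1 * ∑ i ∈ Finset.range n, ‖x‖⁻¹ ^ (i + 1) := by
        rw [one_mul]
        exact Finset.single_le_sum (f := fun i => ‖x‖⁻¹ ^ (i + 1)) (fun _ _ => by positivity)
          (Finset.mem_range.2 hi)
  | zero => exact ⟨0, fun x _ => by simp⟩
  | add f g _ _ ihf ihg =>
    obtain ⟨C, hC⟩ := ihf
    obtain ⟨D, hD⟩ := ihg
    exact ⟨C + D, fun x hx => (norm_add_le _ _).trans (by rw [add_mul]; gcongr <;> simp_all)⟩
  | smul c f _ ihf =>
    obtain ⟨C, hC⟩ := ihf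
    refine ⟨‖c‖ * C, fun x hx => ?_⟩
    rw [Pi.smul_apply, norm_smul, mul_assoc]
    exact mul_le_mul_of_nonneg_left (hC x hx) (norm_nonneg c)

/-- `G` is defined through `fderiv`, which has junk values at the origin, so only agreement on
`{0}ᶜ` is asked for. -/
def IsRadialOfOrder (ξ : ℂ) (n : ℕ) (f : EuclideanSpace ℝ ι → ℂ) : Prop :=
  ∃ g ∈ radialSpan ι ξ n, EqOn f g {0}ᶜ

namespace IsRadialOfOrder

variable {n : ℕ} {f g : EuclideanSpace ℝ ι → ℂ}

theorem of_mem (hf : f ∈ radialSpan ι ξ n) : IsRadialOfOrder ξ n f :=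
  ⟨f, hf, eqOn_refl _ _⟩

theorem mono (hf : IsRadialOfOrder ξ n f) {n' : ℕ} (h : n ≤ n') : IsRadialOfOrder ξ n' f :=
  let ⟨g, hg, hfg⟩ := hf
  ⟨g, radialSpan_mono h hg, hfg⟩

theorem add (hf : IsRadialOfOrder ξ n f) (hg : IsRadialOfOrder ξ n g) :
    IsRadialOfOrder ξ n (f + g) :=
  let ⟨f', hf', hff'⟩ := hf
  let ⟨g', hg', hgg'⟩ := hg
  ⟨f' + g', add_mem hf' hg', fun x hx => by simp [hff' hx, hgg' hx]⟩

theorem const_smul (hf : IsRadialOfOrder ξ n f) (c : ℂ) : IsRadialOfOrder ξ n (c • f) :=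
  let ⟨f', hf', hff'⟩ := hf
  ⟨c • f', Submodule.smul_mem _ c hf', fun x hx => by simp [hff' hx]⟩

theorem differentiableAt (hf : IsRadialOfOrder ξ n f) {x : EuclideanSpace ℝ ι} (hx : x ≠ 0) :
    DifferentiableAt ℝ f x :=
  let ⟨_, hg, hfg⟩ := hf
  (differentiableAt_of_mem_radialSpan hg hx).congr_of_eventuallyEq
    (hfg.eventuallyEq_of_mem (isOpen_compl_singleton.mem_nhds hx))

theorem fderiv_single [DecidableEq ι] (hf : IsRadialOfOrder ξ n f) (m : ι) :
    IsRadialOfOrder ξ (n + 1) fun x => fderiv ℝ f x (EuclideanSpace.single m 1) := by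
  obtain ⟨g, hg, hfg⟩ := hf
  obtain ⟨g', hg', hgg'⟩ := exists_mem_radialSpan_eqOn_fderiv_single hg m
  refine ⟨g', hg', fun x hx => ?_⟩
  dsimp only at hgg' ⊢
  rw [← hgg' hx, (hfg.eventuallyEq_of_mem (isOpen_compl_singleton.mem_nhds hx)).fderiv_eq]

theorem eventually_norm_le (hξ : 0 ≤ ξ.im) (hf : IsRadialOfOrder ξ n f) :
    ∀ᶠ C in atTop, ∀ x ≠ 0, ‖f x‖ ≤ C * ∑ i ∈ Finset.range n, ‖x‖⁻¹ ^ (i + 1) := by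
  obtain ⟨g, hg, hfg⟩ := hf
  obtain ⟨C, hC⟩ := exists_norm_le_of_mem_radialSpan hξ hg
  filter_upwards [eventually_ge_atTop C] with D hD x hx
  rw [hfg hx]
  exact (hC x hx).trans (by gcongr)

end IsRadialOfOrder

end

theorem phi_eq_smul_radialTerm (ξ : ℂ) : Phi ξ = (4 * (π : ℂ))⁻¹ • radialTerm ξ [] 1 := by
  ext x
  simp only [Phi, radialTerm, radialFactor, coordMonomial_nil, Pi.smul_apply, smul_eq_mul,
    Nat.cast_one, zpow_neg_one, div_eq_mul_inv, mul_inv_rev, mul_one]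
  ring

theorem isRadialOfOrder_phi (ξ : ℂ) : IsRadialOfOrder ξ 1 (Phi ξ) := by
  rw [phi_eq_smul_radialTerm]
  exact IsRadialOfOrder.of_mem
    (Submodule.smul_mem _ _ (Submodule.subset_span ⟨[], 1, le_rfl, le_rfl, rfl⟩))

theorem isRadialOfOrder_G (ξ : ℂ) (j l : Fin 3) : IsRadialOfOrder ξ 3 (G ξ j l) := by
  have hG : G ξ j l =
      (-(if j = l then 1 else 0 : ℂ)) • Phi ξ + (1 / ξ ^ 2) • pd j (pd l (Phi ξ)) := by
    ext x
    by_cases hjl : j = l <;> simp [G, hjl]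
  rw [hG]
  exact (((isRadialOfOrder_phi ξ).mono (by norm_num)).const_smul _).add
    ((((isRadialOfOrder_phi ξ).fderiv_single l).fderiv_single j).const_smul _)

theorem stmt_8_general (ξ : ℂ) (him : 0 < ξ.im) :
    (∀ j l : Fin 3, ∀ x : EuclideanSpace ℝ (Fin 3), x ≠ 0 →
      DifferentiableAt ℝ (G ξ j l) x) ∧
    ∃ a b c d : ℝ, 0 < a ∧ 0 < b ∧ 0 < c ∧ 0 < d ∧
      ∀ x : EuclideanSpace ℝ (Fin 3), x ≠ 0 → ∀ j l m : Fin 3,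
        ‖pd m (G ξ j l) x‖ ≤
          a * (1 / ‖x‖) + b * (1 / ‖x‖) ^ 2 + c * (1 / ‖x‖) ^ 3 + d * (1 / ‖x‖) ^ 4 := by
  refine ⟨fun j l x hx => (isRadialOfOrder_G ξ j l).differentiableAt hx, ?_⟩
  have hbound := (eventually_gt_atTop 0).and <| eventually_all.2 fun j => eventually_all.2 fun l =>
    eventually_all.2 fun m => ((isRadialOfOrder_G ξ j l).fderiv_single m).eventually_norm_le him.le
  obtain ⟨C, hC, hCbound⟩ := hbound.exists
  refine ⟨C, C, C, C, hC, hC, hC, hC, fun x hx j l m => (hCbound j l m x hx).trans_eq ?_⟩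
  simp only [Finset.sum_range_succ, Finset.sum_range_zero, zero_add, one_div]
  ring

/-- Each component `G_{jℓ}` is differentiable away from the origin, and there is a
degree-4 polynomial `q(t) = a t + b t² + c t³ + d t⁴` with positive coefficients
(depending only on `|ξ|`) and vanishing constant term such that
`|∂ₘG_{jℓ}(x)| ≤ q(1/‖x‖)` for all `x ≠ 0` and all `j, ℓ, m`. -/
theorem stmt_8 (ξ : ℂ) (hre : 0 < ξ.re) (him : 0 < ξ.im) :
    (∀ j l : Fin 3, ∀ x : EuclideanSpace ℝ (Fin 3), x ≠ 0 →
      DifferentiableAt ℝ (G ξ j l) x) ∧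
    ∃ a b c d : ℝ, 0 < a ∧ 0 < b ∧ 0 < c ∧ 0 < d ∧
      ∀ x : EuclideanSpace ℝ (Fin 3), x ≠ 0 → ∀ j l m : Fin 3,
        ‖pd m (G ξ j l) x‖ ≤
          a * (1 / ‖x‖) + b * (1 / ‖x‖) ^ 2 + c * (1 / ‖x‖) ^ 3 + d * (1 / ‖x‖) ^ 4 :=
  stmt_8_general ξ him
end
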